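/- Let f_1 : S → ℝ be continuous and φ(λ) = ⟨f_1, λ⟩. Then for every ξ ∈ S^E: (i) L_VM(φ ∘ m)(ξ) = 0, and (ii) L_μ(φ ∘ m)(ξ) = ⟨A_μ f_1, m(ξ)⟩ = Σ_{x∈E} π(x) ∫_S [f_1(σ) − f_1(ξ(x))] dμ(σ). -/
import Mathlib


open MeasureTheory Finset

/-- Empirical measure `m(ξ) = ∑_{x∈E} π(x) δ_{ξ(x)}`. -/
noncomputable def empMeas {E S : Type*} [Fintype E] [MeasurableSpace S]
    (π : E → ℝ) (ξ : E → S) : Measure S :=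
  ∑ x : E, (ENNReal.ofReal (π x)) • Measure.dirac (ξ x)

/-- Voting generator `L_VM F(ξ) = ∑_{x,y} q(x,y)[F(ξ^{x,y}) − F(ξ)]`. -/
noncomputable def LVM {E S : Type*} [Fintype E] [DecidableEq E]
    (q : E → E → ℝ) (F : (E → S) → ℝ) (ξ : E → S) : ℝ :=
  ∑ x : E, ∑ y : E, q x y * (F (Function.update ξ x (ξ y)) - F ξ)

/-- Mutation generator `L_μ F(ξ) = ∑_{x∈E} ∫_S [F(ξ^{x|σ}) − F(ξ)] dμ(σ)`. -/
noncomputable def Lmu {E S : Type*} [Fintype E] [DecidableEq E] [MeasurableSpace S]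
    (μ : Measure S) (F : (E → S) → ℝ) (ξ : E → S) : ℝ :=
  ∑ x : E, ∫ σ, (F (Function.update ξ x σ) - F ξ) ∂μ

/-- Mutation operator `A_μ f(τ) = ∫_S [f(σ) − f(τ)] dμ(σ)`. -/
noncomputable def Amu {S : Type*} [MeasurableSpace S]
    (μ : Measure S) (f : S → ℝ) (τ : S) : ℝ :=
  ∫ σ, (f σ - f τ) ∂μ


lemma my_integrable_dirac {α : Type*} [MeasurableSpace α] [MeasurableSingletonClass α]
    (f : α → ℝ) (a : α) : Integrable f (Measure.dirac a) := by
  have h : f =ᵐ[Measure.dirac a] (fun _ => f a) := by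
    rw [Filter.EventuallyEq, MeasureTheory.ae_dirac_eq]
    simp
  exact (integrable_const (f a)).congr h.symm

lemma integral_empMeas {E S : Type*} [Fintype E] [MeasurableSpace S]
    [MeasurableSingletonClass S] (π : E → ℝ) (hπ : ∀ x, 0 ≤ π x) (ξ : E → S)
    (f : S → ℝ) : (∫ σ, f σ ∂(empMeas π ξ)) = ∑ x : E, π x * f (ξ x) := by
  rw [empMeas, integral_finset_sum_measure
    (fun i _ => (my_integrable_dirac f (ξ i)).smul_measure ENNReal.ofReal_ne_top)]
  simp [integral_smul_measure, integral_dirac, ENNReal.toReal_ofReal (hπ _), mul_comm]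

lemma sum_update_diff {E S : Type*} [Fintype E] [DecidableEq E]
    (π : E → ℝ) (f₁ : S → ℝ) (ξ : E → S) (x : E) (s : S) :
    (∑ z : E, π z * f₁ (Function.update ξ x s z)) - ∑ z : E, π z * f₁ (ξ z)
      = π x * (f₁ s - f₁ (ξ x)) := by
  rw [← Finset.sum_sub_distrib, Finset.sum_eq_single x]
  · simp [Function.update_self]; ring
  · intro b _ hb; simp [Function.update_of_ne hb]
  · simp

/-- Corollary 2.2 (1): for `φ(λ) = ⟨f₁, λ⟩`, one has `L_VM(φ∘m)(ξ) = 0` and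
`L_μ(φ∘m)(ξ) = ⟨A_μ f₁, m(ξ)⟩ = ∑_x π(x) ∫ [f₁(σ) − f₁(ξ(x))] dμ(σ)`. -/
theorem generator_on_first_moment
    {E S : Type*} [Fintype E] [DecidableEq E]
    [MetricSpace S] [CompactSpace S] [MeasurableSpace S] [BorelSpace S]
    (hE : 2 ≤ Fintype.card E)
    (q : E → E → ℝ) (π : E → ℝ) (μ : Measure S) [IsFiniteMeasure μ]
    (hq0 : ∀ x y, 0 ≤ q x y) (hq1 : ∀ x, ∑ y, q x y = 1)
    (hqdiag : ∀ x, q x x = 0)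
    (hirr : ∀ x y : E, ∃ n : ℕ, 0 < ((Matrix.of q) ^ n) x y)
    (hπpos : ∀ x, 0 < π x) (hπ1 : ∑ x, π x = 1)
    (hπstat : ∀ y, ∑ x, π x * q x y = π y)
    (f₁ : C(S, ℝ)) (ξ : E → S) :
    LVM q (fun ζ => ∫ σ, f₁ σ ∂(empMeas π ζ)) ξ = 0 ∧
    Lmu μ (fun ζ => ∫ σ, f₁ σ ∂(empMeas π ζ)) ξ =
      ∫ τ, Amu μ f₁ τ ∂(empMeas π ξ) ∧
    (∫ τ, Amu μ f₁ τ ∂(empMeas π ξ)) =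
      ∑ x : E, π x * ∫ σ, (f₁ σ - f₁ (ξ x)) ∂μ := by
  
  have hπ0 : ∀ x, 0 ≤ π x := fun x => (hπpos x).le
  have hemp : ∀ ζ : E → S, (∫ σ, f₁ σ ∂(empMeas π ζ)) = ∑ z : E, π z * f₁ (ζ z) :=
    fun ζ => integral_empMeas π hπ0 ζ f₁
  refine ⟨?_, ?_, ?_⟩
  · rw [LVM]
    have : ∀ x y : E,
        q x y * ((∫ σ, f₁ σ ∂(empMeas π (Function.update ξ x (ξ y))))
          - ∫ σ, f₁ σ ∂(empMeas π ξ))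
        = q x y * π x * f₁ (ξ y) - q x y * π x * f₁ (ξ x) := by
      intro x y
      rw [hemp, hemp, sum_update_diff]
      ring
    simp only [this, Finset.sum_sub_distrib]
    have h1 : ∑ x : E, ∑ y : E, q x y * π x * f₁ (ξ y) = ∑ y : E, π y * f₁ (ξ y) := by
      rw [Finset.sum_comm]
      refine Finset.sum_congr rfl fun y _ => ?_
      rw [← hπstat y, Finset.sum_mul]
      refine Finset.sum_congr rfl fun x _ => ?_
      ring
    have h2 : ∑ x : E, ∑ y : E, q x y * π x * f₁ (ξ x) = ∑ x : E, π x * f₁ (ξ x) := by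
      refine Finset.sum_congr rfl fun x _ => ?_
      have : ∑ y : E, q x y * π x * f₁ (ξ x) = (∑ y : E, q x y) * (π x * f₁ (ξ x)) := by
        rw [Finset.sum_mul]; exact Finset.sum_congr rfl fun y _ => by ring
      rw [this, hq1 x, one_mul]
    rw [h1, h2, sub_self]
  · rw [Lmu]
    have key : ∀ x : E,
        (∫ σ, ((∫ σ', f₁ σ' ∂(empMeas π (Function.update ξ x σ)))
          - ∫ σ', f₁ σ' ∂(empMeas π ξ)) ∂μ) = π x * Amu μ f₁ (ξ x) := by
      intro x
      have h : ∀ σ : S,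
          ((∫ σ', f₁ σ' ∂(empMeas π (Function.update ξ x σ)))
            - ∫ σ', f₁ σ' ∂(empMeas π ξ))
          = π x * (f₁ σ - f₁ (ξ x)) := by
        intro σ; rw [hemp, hemp, sum_update_diff]
      simp only [h]
      rw [integral_const_mul]
      rfl
    simp only [key]
    rw [integral_empMeas π hπ0 ξ (fun τ => Amu μ f₁ τ)]
  · rw [integral_empMeas π hπ0 ξ]
    rfl
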